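/- In a category C equipped with a pre-differential structure satisfying (Dproj-lin) and (D-chain): σ is D-linear if and only if for all f₀, f₁ ∈ C(X, Y) with f₀ ⊞ f₁, one has ∂(f₀ + f₁) = ∂f₀ + ∂f₁ (where ∂f₀ ⊞ ∂f₁ holds automatically). -/
import Mathlib


open CategoryTheory CategoryTheory.Limits
open scoped Classical

universe v u

/-- A summable pairing structure on a category `C` whose hom-sets carry a
distinguished morphism `0` satisfying `0 ∘ f = 0`. -/
structure SummablePairing (C : Type u) [Category.{v} C] where
  /-- the distinguished zero morphism of each hom-set -/
  zero : ∀ X Y : C, X ⟶ Y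
  /-- `0 ∘ f = 0` -/
  comp_zero : ∀ {X Y Z : C} (f : X ⟶ Y), f ≫ zero Y Z = zero X Z
  /-- the map on objects -/
  D : C → C
  p0 : ∀ X : C, D X ⟶ X
  p1 : ∀ X : C, D X ⟶ X
  s : ∀ X : C, D X ⟶ X
  /-- `p0` and `p1` are jointly monic -/
  jointly_monic : ∀ {Y X : C} {f g : Y ⟶ D X},
    f ≫ p0 X = g ≫ p0 X → f ≫ p1 X = g ≫ p1 X → f = g

namespace SummablePairing

variable {C : Type u} [Category.{v} C]

/-- `f0 ⊞ f1` : summability of two parallel morphisms. -/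
def Summable (S : SummablePairing C) {X Y : C} (f0 f1 : X ⟶ Y) : Prop :=
  ∃ w : X ⟶ S.D Y, w ≫ S.p0 Y = f0 ∧ w ≫ S.p1 Y = f1

/-- the witness `⟨f0, f1⟩` of a summable pair (an arbitrary default otherwise) -/
noncomputable def wit (S : SummablePairing C) {X Y : C} (f0 f1 : X ⟶ Y) : X ⟶ S.D Y :=
  if h : S.Summable f0 f1 then h.choose else S.zero X (S.D Y)

/-- the sum `f0 + f1` of a summable pair -/
noncomputable def add (S : SummablePairing C) {X Y : C} (f0 f1 : X ⟶ Y) : X ⟶ Y :=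
  S.wit f0 f1 ≫ S.s Y

/-- additive morphisms -/
def Additive (S : SummablePairing C) {Y Z : C} (h : Y ⟶ Z) : Prop :=
  (∀ X : C, S.zero X Y ≫ h = S.zero X Z) ∧
  (∀ (X : C) (f0 f1 : X ⟶ Y), S.Summable f0 f1 →
    S.Summable (f0 ≫ h) (f1 ≫ h) ∧ S.add f0 f1 ≫ h = S.add (f0 ≫ h) (f1 ≫ h))

/-- a left pre-summability structure: `p0`, `p1` and `s` are additive -/
def IsLeftPreSummability (S : SummablePairing C) : Prop :=
  (∀ X : C, S.Additive (S.p0 X)) ∧ (∀ X : C, S.Additive (S.p1 X)) ∧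
  (∀ X : C, S.Additive (S.s X))

/-- axiom (D-com) -/
def Dcom (S : SummablePairing C) : Prop :=
  ∀ X : C, S.Summable (S.p1 X) (S.p0 X) ∧ S.add (S.p1 X) (S.p0 X) = S.s X

/-- axiom (D-zero) -/
def Dzero (S : SummablePairing C) : Prop :=
  ∀ X : C, S.Summable (𝟙 X) (S.zero X X) ∧ S.Summable (S.zero X X) (𝟙 X) ∧
    S.add (𝟙 X) (S.zero X X) = 𝟙 X ∧ S.add (S.zero X X) (𝟙 X) = 𝟙 X

/-- axiom (D-witness) -/
def Dwitness (S : SummablePairing C) : Prop :=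
  ∀ (Y X : C) (f g : Y ⟶ S.D X),
    S.Summable (f ≫ S.s X) (g ≫ S.s X) → S.Summable f g

/-- a left summability structure -/
def IsLeftSummability (S : SummablePairing C) : Prop :=
  S.IsLeftPreSummability ∧ S.Dcom ∧ S.Dzero ∧ S.Dwitness

/-- `ι₀ = ⟨id, 0⟩` -/
noncomputable def iota0 (S : SummablePairing C) (X : C) : X ⟶ S.D X :=
  S.wit (𝟙 X) (S.zero X X)

/-- `θ = ⟨π₀ ∘ π₀, π₁ ∘ π₀ + π₀ ∘ π₁⟩` -/
noncomputable def theta (S : SummablePairing C) (X : C) : S.D (S.D X) ⟶ S.D X :=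
  S.wit (S.p0 (S.D X) ≫ S.p0 X)
    (S.add (S.p0 (S.D X) ≫ S.p1 X) (S.p1 (S.D X) ≫ S.p0 X))

/-- `l = ⟨⟨π₀, 0⟩, ⟨0, π₁⟩⟩` -/
noncomputable def lmor (S : SummablePairing C) (X : C) : S.D X ⟶ S.D (S.D X) :=
  S.wit (S.wit (S.p0 X) (S.zero (S.D X) X)) (S.wit (S.zero (S.D X) X) (S.p1 X))

/-- `c = ⟨⟨π₀ ∘ π₀, π₀ ∘ π₁⟩, ⟨π₁ ∘ π₀, π₁ ∘ π₁⟩⟩` -/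
noncomputable def cmor (S : SummablePairing C) (X : C) : S.D (S.D X) ⟶ S.D (S.D X) :=
  S.wit (S.wit (S.p0 (S.D X) ≫ S.p0 X) (S.p1 (S.D X) ≫ S.p0 X))
        (S.wit (S.p0 (S.D X) ≫ S.p1 X) (S.p1 (S.D X) ≫ S.p1 X))

end SummablePairing

/-- summability of a finite family of morphisms (represented as a multiset),
together with its sum, defined inductively -/
inductive SummablePairing.MSummable {C : Type u} [Category.{v} C] (S : SummablePairing C) :
    ∀ {X Y : C}, Multiset (X ⟶ Y) → (X ⟶ Y) → Prop
  | nil {X Y : C} : SummablePairing.MSummable S (0 : Multiset (X ⟶ Y)) (S.zero X Y)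
  | cons {X Y : C} {m : Multiset (X ⟶ Y)} {t f : X ⟶ Y} :
      SummablePairing.MSummable S m t → S.Summable t f →
      SummablePairing.MSummable S (f ::ₘ m) (S.add t f)

/-- the data making a left summability structure a pre-differential structure:
an operator `D` on morphisms with `π₀ ∘ D f = f ∘ π₀` -/
structure DiffOp {C : Type u} [Category.{v} C] (S : SummablePairing C) where
  map : ∀ {X Y : C}, (X ⟶ Y) → (S.D X ⟶ S.D Y)
  map_p0 : ∀ {X Y : C} (f : X ⟶ Y), map f ≫ S.p0 Y = S.p0 X ≫ f

namespace DiffOp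

variable {C : Type u} [Category.{v} C] {S : SummablePairing C}

/-- the differential `∂f = π₁ ∘ D f` -/
def dd (Dm : DiffOp S) {X Y : C} (f : X ⟶ Y) : S.D X ⟶ Y := Dm.map f ≫ S.p1 Y

/-- D-linear morphisms -/
def DLinear (Dm : DiffOp S) {X Y : C} (f : X ⟶ Y) : Prop :=
  Dm.map f ≫ S.p1 Y = S.p1 X ≫ f ∧ Dm.map f ≫ S.s Y = S.s X ≫ f ∧
  (∀ U : C, S.zero U X ≫ f = S.zero U Y)

/-- axiom (Dproj-lin) -/
def DprojLin (Dm : DiffOp S) : Prop :=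
  (∀ X : C, Dm.DLinear (S.p0 X)) ∧ (∀ X : C, Dm.DLinear (S.p1 X))

/-- axiom (Dsum-lin) -/
def DsumLin (Dm : DiffOp S) : Prop :=
  (∀ X : C, Dm.DLinear (S.s X)) ∧ (∀ X Y : C, Dm.DLinear (S.zero X Y))

/-- axiom (D-chain): functoriality -/
def Dchain (Dm : DiffOp S) : Prop :=
  (∀ X : C, Dm.map (𝟙 X) = 𝟙 (S.D X)) ∧
  (∀ (X Y Z : C) (f : X ⟶ Y) (g : Y ⟶ Z), Dm.map (f ≫ g) = Dm.map f ≫ Dm.map g)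

/-- axiom (D-add): naturality of `ι₀` and `θ` -/
def Dadd (Dm : DiffOp S) : Prop :=
  (∀ (X Y : C) (f : X ⟶ Y), S.iota0 X ≫ Dm.map f = f ≫ S.iota0 Y) ∧
  (∀ (X Y : C) (f : X ⟶ Y), S.theta X ≫ Dm.map f = Dm.map (Dm.map f) ≫ S.theta Y)

/-- axiom (D-lin): naturality of `l` -/
def Dlin (Dm : DiffOp S) : Prop :=
  ∀ (X Y : C) (f : X ⟶ Y), Dm.map f ≫ S.lmor Y = S.lmor X ≫ Dm.map (Dm.map f)

/-- axiom (D-Schwarz): naturality of `c` -/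
def Dschwarz (Dm : DiffOp S) : Prop :=
  ∀ (X Y : C) (f : X ⟶ Y),
    S.cmor X ≫ Dm.map (Dm.map f) = Dm.map (Dm.map f) ≫ S.cmor Y

end DiffOp

namespace SummablePairing

variable {C : Type u} [Category.{v} C] (S : SummablePairing C)

lemma wit_p0 {X Y : C} {f0 f1 : X ⟶ Y} (h : S.Summable f0 f1) :
    S.wit f0 f1 ≫ S.p0 Y = f0 := by
  rw [wit, dif_pos h]; exact h.choose_spec.1

lemma wit_p1 {X Y : C} {f0 f1 : X ⟶ Y} (h : S.Summable f0 f1) :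
    S.wit f0 f1 ≫ S.p1 Y = f1 := by
  rw [wit, dif_pos h]; exact h.choose_spec.2

lemma wit_eq {X Y : C} {f0 f1 : X ⟶ Y} {w : X ⟶ S.D Y}
    (h0 : w ≫ S.p0 Y = f0) (h1 : w ≫ S.p1 Y = f1) :
    S.wit f0 f1 = w := by
  have hs : S.Summable f0 f1 := ⟨w, h0, h1⟩
  exact S.jointly_monic (by rw [S.wit_p0 hs, h0]) (by rw [S.wit_p1 hs, h1])

lemma add_eq {X Y : C} {f0 f1 : X ⟶ Y} {w : X ⟶ S.D Y}
    (h0 : w ≫ S.p0 Y = f0) (h1 : w ≫ S.p1 Y = f1) :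
    S.add f0 f1 = w ≫ S.s Y := by
  rw [add, S.wit_eq h0 h1]

lemma add_comm' (hcom : S.Dcom) {X Y : C} {f0 f1 : X ⟶ Y} (h : S.Summable f0 f1) :
    S.add f0 f1 = S.add f1 f0 := by
  obtain ⟨hus, hadd⟩ := hcom Y
  set u := S.wit (S.p1 Y) (S.p0 Y) with hu
  have hu0 : u ≫ S.p0 Y = S.p1 Y := S.wit_p0 hus
  have hu1 : u ≫ S.p1 Y = S.p0 Y := S.wit_p1 hus
  set w := S.wit f0 f1 with hw
  have h0 : w ≫ S.p0 Y = f0 := S.wit_p0 h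
  have h1 : w ≫ S.p1 Y = f1 := S.wit_p1 h
  have h0' : (w ≫ u) ≫ S.p0 Y = f1 := by rw [Category.assoc, hu0, h1]
  have h1' : (w ≫ u) ≫ S.p1 Y = f0 := by rw [Category.assoc, hu1, h0]
  rw [S.add_eq h0 h1, S.add_eq h0' h1', Category.assoc]
  have : u ≫ S.s Y = S.s Y := hadd
  rw [this]

end SummablePairing

/-- under (Dproj-lin) and (D-chain), `σ` is D-linear iff
`∂(f₀ + f₁) = ∂f₀ + ∂f₁` for all summable `f₀, f₁`. -/
theorem stmt14 {C : Type u} [Category.{v} C] (S : SummablePairing C)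
    (hS : S.IsLeftSummability) (Dm : DiffOp S)
    (hproj : Dm.DprojLin) (hchain : Dm.Dchain) :
    (∀ X : C, Dm.DLinear (S.s X)) ↔
      (∀ (X Y : C) (f0 f1 : X ⟶ Y), S.Summable f0 f1 →
        S.Summable (Dm.dd f0) (Dm.dd f1) ∧
        Dm.dd (S.add f0 f1) = S.add (Dm.dd f0) (Dm.dd f1)) := by
  constructor
  · intro hlin X Y f0 f1 h
    set w := S.wit f0 f1 with hw
    have h0 : w ≫ S.p0 Y = f0 := S.wit_p0 h
    have h1 : w ≫ S.p1 Y = f1 := S.wit_p1 h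
    set v := Dm.map w ≫ S.p1 (S.D Y) with hv
    have hv0 : v ≫ S.p0 Y = Dm.dd f0 := by
      rw [hv, Category.assoc, ← (hproj.1 Y).1, ← Category.assoc, ← hchain.2 _ _ _ w (S.p0 Y),
        h0, DiffOp.dd]
    have hv1 : v ≫ S.p1 Y = Dm.dd f1 := by
      rw [hv, Category.assoc, ← (hproj.2 Y).1, ← Category.assoc, ← hchain.2 _ _ _ w (S.p1 Y),
        h1, DiffOp.dd]
    refine ⟨⟨v, hv0, hv1⟩, ?_⟩
    have hsum : S.add f0 f1 = w ≫ S.s Y := rfl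
    rw [S.add_eq hv0 hv1, hsum, DiffOp.dd, hchain.2 _ _ _ w (S.s Y), Category.assoc,
      (hlin Y).1, hv, Category.assoc]
  · intro H X
    -- p1-component
    obtain ⟨hcomsum, hcomadd⟩ := hS.2.1 X
    have hp1 : Dm.map (S.s X) ≫ S.p1 X = S.p1 (S.D X) ≫ S.s X := by
      obtain ⟨_, heq⟩ := H (S.D X) X (S.p1 X) (S.p0 X) hcomsum
      rw [hcomadd] at heq
      -- compute the RHS sum
      set u := S.wit (S.p1 X) (S.p0 X) with hu
      have hdd1 : Dm.dd (S.p1 X) = S.p1 (S.D X) ≫ S.p1 X := (hproj.2 X).1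
      have hdd0 : Dm.dd (S.p0 X) = S.p1 (S.D X) ≫ S.p0 X := (hproj.1 X).1
      have h0' : (S.p1 (S.D X) ≫ u) ≫ S.p0 X = Dm.dd (S.p1 X) := by
        rw [Category.assoc, S.wit_p0 hcomsum, hdd1]
      have h1' : (S.p1 (S.D X) ≫ u) ≫ S.p1 X = Dm.dd (S.p0 X) := by
        rw [Category.assoc, S.wit_p1 hcomsum, hdd0]
      have hus : u ≫ S.s X = S.s X := hcomadd
      rw [S.add_eq h0' h1', Category.assoc, hus, DiffOp.dd] at heq
      exact heq
    refine ⟨hp1, ?_, (hS.1.2.2 X).1⟩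
    -- σ-component
    have hA : Dm.map (S.s X) ≫ S.s X
        = S.add (S.p0 (S.D X) ≫ S.s X) (S.p1 (S.D X) ≫ S.s X) :=
      (S.add_eq (Dm.map_p0 (S.s X)) hp1).symm
    obtain ⟨hcomsum', hcomadd'⟩ := hS.2.1 (S.D X)
    obtain ⟨_, hadditive⟩ := hS.1.2.2 X
    obtain ⟨_, hB⟩ := hadditive _ (S.p1 (S.D X)) (S.p0 (S.D X)) hcomsum'
    rw [hcomadd'] at hB
    rw [hA, S.add_comm' hS.2.1 ⟨Dm.map (S.s X), Dm.map_p0 (S.s X), hp1⟩, ← hB]
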